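/- arXiv:1609.01195 — 3 statements merged into one kernel-verified Lean document; each statement's English description precedes it below -/
import Mathlib

section
/- Let A = ℚ[a,b] be the polynomial ring in two variables (realized as MvPolynomial (Fin 2) ℚ with a = X 0, b = X 1). Let G ∈ A⟦t⟧ be any power series with G · (1 + (2a+4b)t) = 1, and let C ∈ A be the coefficient of t³ in the power series (1 + at)² (1 + bt)⁴ · G. Then for every ℚ-linear map φ : A → ℚ satisfying φ(a·b³) = 1 and φ(a⁴) = φ(a³·b) = φ(a²·b²) = φ(b⁴) = 0, one has φ(C · (2a + 4b)) = −168. -/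
/-!
The Chern polynomial of `X₁₄` is `(1 + a t)²(1 + b t)⁴ / (1 + s t)` with `s = 2a + 4b`. Writing
`(1 + a t)²(1 + b t)⁴ = 1 + e₁ t + e₂ t² + e₃ t³ + ⋯`, the Calabi–Yau condition `e₁ = s` makes the
`t³`-coefficient collapse to `c₃ = e₃ - e₂ s`. Hence `c₃ s` is an explicit quartic in `a, b`, and the
degree map only sees its `a b³`-coefficient, `-168`.
-/

open MvPolynomial

namespace PowerSeries

variable {R : Type*} [CommRing R]

theorem coeff_eq_neg_pow_of_mul_one_add_C_mul_X_eq_one {G : R⟦X⟧} {s : R}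
    (hG : G * (1 + C s * X) = 1) (n : ℕ) : coeff n G = (-s) ^ n := by
  induction n with
  | zero => simpa using congrArg (coeff 0) hG
  | succ n ih =>
    have hrec : coeff (n + 1) G + s * coeff n G = 0 := by
      have := congrArg (coeff (n + 1)) hG
      rwa [mul_add, mul_one, mul_left_comm, ← mul_assoc, map_add, coeff_succ_mul_X, coeff_C_mul,
        coeff_one, if_neg n.succ_ne_zero] at this
    rw [pow_succ, ← ih]
    linear_combination hrec

theorem coeff_one_add_C_mul_X_pow (a : R) (n k : ℕ) :
    coeff k ((1 + C a * X) ^ n) = n.choose k * a ^ k := by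
  rw [← rescale_X, ← map_one (rescale a), ← map_add, ← map_pow, coeff_rescale,
    ← Polynomial.coe_X, ← Polynomial.coe_one, ← Polynomial.coe_add, ← Polynomial.coe_pow,
    Polynomial.coeff_coe, Polynomial.coeff_one_add_X_pow, mul_comm]

theorem coeff_three_one_add_C_mul_X_pow_two_mul_pow_four_mul_inv {a b : R} {G : R⟦X⟧}
    (hG : G * (1 + C (2 * a + 4 * b) * X) = 1) :
    coeff 3 ((1 + C a * X) ^ 2 * (1 + C b * X) ^ 4 * G) =
      (4 * a ^ 2 * b + 12 * a * b ^ 2 + 4 * b ^ 3) -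
        (a ^ 2 + 8 * a * b + 6 * b ^ 2) * (2 * a + 4 * b) := by
  simp only [coeff_mul, coeff_eq_neg_pow_of_mul_one_add_C_mul_X_eq_one hG,
    coeff_one_add_C_mul_X_pow, Finset.Nat.sum_antidiagonal_succ, Finset.Nat.antidiagonal_zero,
    Finset.sum_singleton]
  norm_num [Nat.choose]
  ring

end PowerSeries

/-- Euler number of the degree 14 Calabi–Yau threefold `X₁₄ ⊂ ℙ¹ × ℙ³`:
with `a = X 0`, `b = X 1` the hyperplane classes, `G = (1 + (2a+4b)t)⁻¹`,
`c₃ = [t³] ((1+at)²(1+bt)⁴ · G)`, and `φ` the degree map on `H⁶(ℙ¹×ℙ³)`,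
one has `φ(c₃ · (2a+4b)) = −168`. -/
theorem euler_number_deg14
    (G : PowerSeries (MvPolynomial (Fin 2) ℚ))
    (hG : G * (1 + PowerSeries.C (2 * X 0 + 4 * X 1) *
        PowerSeries.X) = 1)
    (c₃ : MvPolynomial (Fin 2) ℚ)
    (hc₃ : c₃ = PowerSeries.coeff 3
      ((1 + PowerSeries.C (X 0) * PowerSeries.X) ^ 2 *
       (1 + PowerSeries.C (X 1) * PowerSeries.X) ^ 4 * G))
    (φ : MvPolynomial (Fin 2) ℚ →ₗ[ℚ] ℚ)
    (h1 : φ (X 0 * X 1 ^ 3) = 1)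
    (h2 : φ (X 0 ^ 4) = 0)
    (h3 : φ (X 0 ^ 3 * X 1) = 0)
    (h4 : φ (X 0 ^ 2 * X 1 ^ 2) = 0)
    (h5 : φ (X 1 ^ 4) = 0) :
    φ (c₃ * (2 * X 0 + 4 * X 1)) = -168 := by
  have hquartic : c₃ * (2 * X 0 + 4 * X 1) =
      (-4 : ℚ) • X 0 ^ 4 + (-40 : ℚ) • (X 0 ^ 3 * X 1) + (-128 : ℚ) • (X 0 ^ 2 * X 1 ^ 2) +
        (-168 : ℚ) • (X 0 * X 1 ^ 3) + (-80 : ℚ) • X 1 ^ 4 := by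
    rw [hc₃, PowerSeries.coeff_three_one_add_C_mul_X_pow_two_mul_pow_four_mul_inv hG]
    simp only [smul_eq_C_mul, map_neg, map_ofNat]
    ring
  rw [hquartic]
  simp only [map_add, map_smul, h1, h2, h3, h4, h5, smul_eq_mul]
  norm_num
end

section
/- Let A = ℚ[h,η] be the polynomial ring in two variables (realized as MvPolynomial (Fin 2) ℚ with h = X 0, η = X 1). Let G ∈ A⟦t⟧ be any power series with G · (1 + 2ηt)² (1 + (−2h+3η)t) = 1, and let C ∈ A be the coefficient of t³ in the power series (1 + ht)² (1 + ηt)² (1 + (−h+η)t)³ (1 + (−h+2η)t) · G. Then the polynomial C · (2η)² · (−2h + 3η) − (212·h·η⁵ − 120·η⁶) lies in the ideal of A generated by h². -/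
/-!
Since `G` inverts `c(N_{X/𝔽})`, the series `c(T_𝔽) · G` is `c(T_X)`, and its coefficients up to
`t³` only depend on `c(T_𝔽)` modulo `t⁴`. Modulo `t⁴`, `c(T_𝔽)` equals `Q · c(N_{X/𝔽})` for an
explicit cubic `Q`, so `c₃(T_X)` is the `t³`-coefficient `2h³ - 7h²η + 11hη² - 10η³` of `Q`.
The rest is polynomial arithmetic modulo `h²`.
-/

namespace PowerSeries

variable {R : Type*} [CommRing R]

theorem coeff_mul_eq_of_X_pow_dvd_sub_mul {F G N Q : R⟦X⟧} {n : ℕ} (hGF : G * F = 1)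
    (hN : X ^ (n + 1) ∣ N - Q * F) : coeff n (N * G) = coeff n Q := by
  obtain ⟨E, hE⟩ := hN
  have hNG : N * G = Q + X ^ (n + 1) * (E * G) := by
    linear_combination G * hE + Q * hGF
  rw [hNG, map_add, coeff_X_pow_mul', if_neg (by omega), add_zero]

end PowerSeries

noncomputable section ChernPolynomials

open PowerSeries

variable {R : Type*} [CommRing R] (h η : R)

def tangentChernPoly : R⟦X⟧ :=
  (1 + C h * X) ^ 2 * (1 + C η * X) ^ 2 * (1 + C (-h + η) * X) ^ 3 * (1 + C (-h + 2 * η) * X)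

def normalChernPoly : R⟦X⟧ :=
  (1 + C (2 * η) * X) ^ 2 * (1 + C (-2 * h + 3 * η) * X)

/-- The truncation of `tangentChernPoly / normalChernPoly` below degree four; it has no linear term
since `c₁(X) = 0`. -/
def chernPolyCY : R⟦X⟧ :=
  1 + C (4 * η ^ 2 - h * η - h ^ 2) * X ^ 2
    + C (2 * h ^ 3 - 7 * h ^ 2 * η + 11 * h * η ^ 2 - 10 * η ^ 3) * X ^ 3

theorem X_pow_four_dvd_tangentChernPoly_sub :
    X ^ 4 ∣ tangentChernPoly h η - chernPolyCY h η * normalChernPoly h η := by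
  refine ⟨C (3 * h ^ 4 - 18 * h ^ 3 * η + 40 * h ^ 2 * η ^ 2 - 47 * h * η ^ 3 + 31 * η ^ 4)
    + C (-2 * h ^ 5 + 19 * h ^ 4 * η - 72 * h ^ 3 * η ^ 2 + 151 * h ^ 2 * η ^ 3 - 194 * h * η ^ 4
      + 123 * η ^ 5) * X
    + C (h ^ 6 - 9 * h ^ 5 * η + 34 * h ^ 4 * η ^ 2 - 77 * h ^ 3 * η ^ 3 + 142 * h ^ 2 * η ^ 4
      - 197 * h * η ^ 5 + 122 * η ^ 6) * X ^ 2
    + C (2 * h ^ 6 * η - 12 * h ^ 5 * η ^ 2 + 23 * h ^ 4 * η ^ 3 - 14 * h ^ 3 * η ^ 4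
      - 3 * h ^ 2 * η ^ 5 + 4 * h * η ^ 6) * X ^ 3
    + C (h ^ 6 * η ^ 2 - 5 * h ^ 5 * η ^ 3 + 9 * h ^ 4 * η ^ 4 - 7 * h ^ 3 * η ^ 5
      + 2 * h ^ 2 * η ^ 6) * X ^ 4, ?_⟩
  simp only [tangentChernPoly, normalChernPoly, chernPolyCY, map_add, map_sub, map_mul, map_neg,
    map_pow, map_ofNat]
  ring

theorem coeff_three_tangentChernPoly_mul {G : R⟦X⟧} (hG : G * normalChernPoly h η = 1) :
    coeff 3 (tangentChernPoly h η * G) = 2 * h ^ 3 - 7 * h ^ 2 * η + 11 * h * η ^ 2 - 10 * η ^ 3 := by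
  rw [coeff_mul_eq_of_X_pow_dvd_sub_mul hG (X_pow_four_dvd_tangentChernPoly_sub h η), chernPolyCY]
  simp only [map_add, coeff_one, coeff_C_mul_X_pow]
  norm_num

end ChernPolynomials

open MvPolynomial

/-- Chern class computation for Calabi–Yau no. 6: with `h = X 0`, `η = X 1`,
`G = ((1+2ηt)²(1+(−2h+3η)t))⁻¹`, and
`c₃ = [t³] ((1+ht)²(1+ηt)²(1+(−h+η)t)³(1+(−h+2η)t) · G)`, the class
`c₃ · (2η)² · (−2h+3η)` equals `212hη⁵ − 120η⁶` modulo the ideal `(h²)`. -/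
theorem chern_class_no6
    (G : PowerSeries (MvPolynomial (Fin 2) ℚ))
    (hG : G * (1 + PowerSeries.C (R := MvPolynomial (Fin 2) ℚ) (2 * X 1) * PowerSeries.X) ^ 2 *
        (1 + PowerSeries.C (R := MvPolynomial (Fin 2) ℚ) (-2 * X 0 + 3 * X 1) * PowerSeries.X)
        = 1)
    (c₃ : MvPolynomial (Fin 2) ℚ)
    (hc₃ : c₃ = PowerSeries.coeff (R := MvPolynomial (Fin 2) ℚ) 3
      ((1 + PowerSeries.C (R := MvPolynomial (Fin 2) ℚ) (X 0) * PowerSeries.X) ^ 2 *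
       (1 + PowerSeries.C (R := MvPolynomial (Fin 2) ℚ) (X 1) * PowerSeries.X) ^ 2 *
       (1 + PowerSeries.C (R := MvPolynomial (Fin 2) ℚ) (-X 0 + X 1) * PowerSeries.X) ^ 3 *
       (1 + PowerSeries.C (R := MvPolynomial (Fin 2) ℚ) (-X 0 + 2 * X 1) * PowerSeries.X) * G)) :
    c₃ * (2 * X 1) ^ 2 * (-2 * X 0 + 3 * X 1)
        - (212 * X 0 * X 1 ^ 5 - 120 * X 1 ^ 6)
      ∈ Ideal.span {(X 0 ^ 2 : MvPolynomial (Fin 2) ℚ)} := by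
  have hGN : G * normalChernPoly (X 0) (X 1) = 1 := by
    rw [normalChernPoly, ← mul_assoc]
    exact hG
  have hc : c₃ = 2 * X 0 ^ 3 - 7 * X 0 ^ 2 * X 1 + 11 * X 0 * X 1 ^ 2 - 10 * X 1 ^ 3 :=
    hc₃.trans (coeff_three_tangentChernPoly_mul (X 0) (X 1) hGN)
  rw [Ideal.mem_span_singleton', hc]
  exact ⟨4 * X 1 ^ 2 * (2 * X 0 - 7 * X 1) * (3 * X 1 - 2 * X 0) - 88 * X 1 ^ 4, by ring⟩
end

section
/- Let A = ℚ[h,η] be the polynomial ring in two variables (realized as MvPolynomial (Fin 2) ℚ with h = X 0, η = X 1). Let G ∈ A⟦t⟧ be any power series with G · (1 + 2ηt)² (1 + (−2h+3η)t) = 1, and let C ∈ A be the coefficient of t³ in the power series (1 + ht)² (1 + ηt)² (1 + (−h+η)t)³ (1 + (−h+2η)t) · G. Then for every ℚ-linear map φ : A → ℚ satisfying φ(h·η⁵) = 1/2, φ(η⁶) = 7/4, and φ(h^i·η^(6−i)) = 0 for all 2 ≤ i ≤ 6, one has φ(C · (2η)² · (−2h + 3η)) = −104. -/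
open MvPolynomial
open scoped PowerSeries

/-!
By adjunction `c(T_X) = c(T_𝔽) / c(N)`, and since `X` is a threefold only classes of degree `≤ 3`
matter: `c₃(T_X)` is the `t³`-coefficient of any series `Q` with `c(T_𝔽) ≡ Q · c(N) mod t⁴`, so it
suffices to exhibit `Q = 1 + c₂ t² + c₃ t³` (no linear term, as `X` is Calabi–Yau) and check the
congruence in `A⟦t⟧ ⧸ (t⁴)`. Then `e(X)` is the degree of the sextic form `c₃ · (2η)² (−2h + 3η)`,
which `φ` reads off from its `η⁶` and `hη⁵` coefficients.
-/

local notation "A" => MvPolynomial (Fin 2) ℚ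

theorem PowerSeries.mk_X_pow_eq_zero_of_le {R : Type*} [CommRing R] {n k : ℕ} (hk : n ≤ k) :
    Ideal.Quotient.mk (Ideal.span {(X : R⟦X⟧) ^ n}) X ^ k = 0 := by
  rw [← map_pow, Ideal.Quotient.eq_zero_iff_mem, Ideal.mem_span_singleton]
  exact pow_dvd_pow X hk

theorem PowerSeries.coeff_mul_eq_of_X_pow_dvd {R : Type*} [CommRing R] {E G P Q : R⟦X⟧} {n : ℕ}
    (hG : G * E = 1) (hPQ : X ^ (n + 1) ∣ P - Q * E) : coeff n (P * G) = coeff n Q := by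
  have hdvd : X ^ (n + 1) ∣ P * G - Q := by
    have : P * G - Q = (P - Q * E) * G := by linear_combination Q * hG
    exact this ▸ dvd_mul_of_dvd_left hPQ G
  rw [← sub_eq_zero, ← map_sub]
  exact X_pow_dvd_iff.mp hdvd n n.lt_succ_self

noncomputable section

def chernTangent : A⟦X⟧ :=
  (1 + PowerSeries.C (X 0) * PowerSeries.X) ^ 2 * (1 + PowerSeries.C (X 1) * PowerSeries.X) ^ 2 *
    (1 + PowerSeries.C (-X 0 + X 1) * PowerSeries.X) ^ 3 *
    (1 + PowerSeries.C (-X 0 + 2 * X 1) * PowerSeries.X)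

def chernNormal : A⟦X⟧ :=
  (1 + PowerSeries.C (2 * X 1) * PowerSeries.X) ^ 2 *
    (1 + PowerSeries.C (-2 * X 0 + 3 * X 1) * PowerSeries.X)

def c₂X : A := -X 0 ^ 2 - X 0 * X 1 + 4 * X 1 ^ 2

def c₃X : A := 2 * X 0 ^ 3 - 7 * X 0 ^ 2 * X 1 + 11 * X 0 * X 1 ^ 2 - 10 * X 1 ^ 3

def chernX : A⟦X⟧ := 1 + PowerSeries.C c₂X * PowerSeries.X ^ 2 + PowerSeries.C c₃X * PowerSeries.X ^ 3

end

theorem coeff_three_chernX : PowerSeries.coeff 3 chernX = c₃X := by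
  simp [chernX, PowerSeries.coeff_X_pow]

theorem X_pow_four_dvd_chernTangent_sub_chernX_mul_chernNormal :
    PowerSeries.X ^ 4 ∣ chernTangent - chernX * chernNormal := by
  rw [← Ideal.mem_span_singleton, ← Ideal.Quotient.eq_zero_iff_mem]
  simp only [chernTangent, chernX, chernNormal, c₂X, c₃X, map_sub, map_mul, map_add, map_pow,
    map_one, map_neg, map_ofNat]
  ring_nf
  simp (disch := norm_num) only [PowerSeries.mk_X_pow_eq_zero_of_le, mul_zero, zero_mul, add_zero,
    neg_zero, sub_zero]

theorem degree_apply_sextic (φ : A →ₗ[ℚ] ℚ) (h1 : φ (X 0 * X 1 ^ 5) = 1 / 2)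
    (h2 : φ (X 1 ^ 6) = 7 / 4) (h3 : ∀ i : ℕ, 2 ≤ i → i ≤ 6 → φ (X 0 ^ i * X 1 ^ (6 - i)) = 0)
    (a : Fin 7 → ℚ) :
    φ (∑ i : Fin 7, a i • (X 0 ^ (i : ℕ) * X 1 ^ (6 - (i : ℕ)))) = a 1 / 2 + 7 / 4 * a 0 := by
  have htail : ∑ i : Fin 5, a i.succ.succ • φ (X 0 ^ (i + 2 : ℕ) * X 1 ^ (6 - (i + 2 : ℕ))) = 0 :=
    Finset.sum_eq_zero fun i _ => by rw [h3 _ (by omega) (by omega), smul_zero]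
  rw [map_sum, Fin.sum_univ_succ, Fin.sum_univ_succ]
  simp only [map_smul, Fin.val_succ, Fin.val_zero, htail]
  norm_num [h1, h2]
  ring

theorem c₃X_mul_eq_sum_monomials :
    c₃X * (2 * X 1) ^ 2 * (-2 * X 0 + 3 * X 1) =
      ∑ i : Fin 7, (![-120, 212, -172, 80, -16, 0, 0] : Fin 7 → ℚ) i •
        (X 0 ^ (i : ℕ) * X 1 ^ (6 - (i : ℕ)) : A) := by
  simp only [c₃X, Fin.sum_univ_seven, Matrix.cons_val, Fin.coe_ofNat_eq_mod, Nat.reduceMod,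
    Nat.reduceSub, smul_eq_C_mul, map_neg, map_ofNat, map_zero]
  ring

/-- Euler number of Calabi–Yau no. 6: with `h = X 0`, `η = X 1`,
`G = ((1+2ηt)²(1+(−2h+3η)t))⁻¹`,
`c₃ = [t³] ((1+ht)²(1+ηt)²(1+(−h+η)t)³(1+(−h+2η)t) · G)`, and `φ` the degree map
determined by `φ(hη⁵) = 1/2`, `φ(η⁶) = 7/4`, `φ(hⁱη⁶⁻ⁱ) = 0` for `2 ≤ i ≤ 6`,
one has `φ(c₃ · (2η)² · (−2h+3η)) = −104`. -/
theorem euler_number_no6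
    (G : PowerSeries (MvPolynomial (Fin 2) ℚ))
    (hG : G * (1 + PowerSeries.C (2 * X 1) * PowerSeries.X) ^ 2 *
        (1 + PowerSeries.C (-2 * X 0 + 3 * X 1) * PowerSeries.X)
        = 1)
    (c₃ : MvPolynomial (Fin 2) ℚ)
    (hc₃ : c₃ = PowerSeries.coeff (R := MvPolynomial (Fin 2) ℚ) 3
      ((1 + PowerSeries.C (X 0) * PowerSeries.X) ^ 2 *
       (1 + PowerSeries.C (X 1) * PowerSeries.X) ^ 2 *
       (1 + PowerSeries.C (-X 0 + X 1) * PowerSeries.X) ^ 3 *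
       (1 + PowerSeries.C (-X 0 + 2 * X 1) * PowerSeries.X) * G))
    (φ : MvPolynomial (Fin 2) ℚ →ₗ[ℚ] ℚ)
    (h1 : φ (X 0 * X 1 ^ 5) = 1 / 2)
    (h2 : φ (X 1 ^ 6) = 7 / 4)
    (h3 : ∀ i : ℕ, 2 ≤ i → i ≤ 6 → φ (X 0 ^ i * X 1 ^ (6 - i)) = 0) :
    φ (c₃ * (2 * X 1) ^ 2 * (-2 * X 0 + 3 * X 1)) = -104 := by
  have hGinv : G * chernNormal = 1 := by rw [chernNormal, ← mul_assoc, hG]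
  have hc : c₃ = c₃X := by
    rw [hc₃, ← coeff_three_chernX]
    exact PowerSeries.coeff_mul_eq_of_X_pow_dvd hGinv
      X_pow_four_dvd_chernTangent_sub_chernX_mul_chernNormal
  rw [hc, c₃X_mul_eq_sum_monomials, degree_apply_sextic φ h1 h2 h3]
  norm_num
end
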